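/- Let G be a group with a homogeneous pregeometry, A ⊆ G finite, and (a,b) a generic pair over A. If b·a ∈ cl(A ∪ {a·b}) for this pair, then for every pair (x,y) generic over A, y⁻¹·x·y ∈ cl(A ∪ {x}). -/
import Mathlib


universe u

def IsPregeometry {X : Type u} (cl : Set X → Set X) : Prop :=
  (∀ A, A ⊆ cl A) ∧
  (∀ A B : Set X, A ⊆ B → cl A ⊆ cl B) ∧
  (∀ A, cl (cl A) = cl A) ∧
  (∀ (A : Set X) (a : X), a ∈ cl A → ∃ A₀, A₀ ⊆ A ∧ A₀.Finite ∧ a ∈ cl A₀) ∧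
  (∀ (A : Set X) (a b : X), a ∈ cl (A ∪ {b}) → a ∉ cl A → b ∈ cl (A ∪ {a}))

def Indep {X : Type u} (cl : Set X → Set X) (B : Set X) : Prop :=
  ∀ a ∈ B, a ∉ cl (B \ {a})

def IsBasisOf {X : Type u} (cl : Set X → Set X) (B Y : Set X) : Prop :=
  B ⊆ Y ∧ Y ⊆ cl B ∧ Indep cl B

def HasDim {X : Type u} (cl : Set X → Set X) (Y : Set X) (n : ℕ) : Prop :=
  ∃ B : Finset X, IsBasisOf cl ↑B Y ∧ B.card = n

def IsClosedSet {X : Type u} (cl : Set X → Set X) (A : Set X) : Prop := cl A = A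

def IsModular {X : Type u} (cl : Set X → Set X) : Prop :=
  ∀ (A B : Set X) (m n p q : ℕ), IsClosedSet cl A → IsClosedSet cl B →
    HasDim cl A m → HasDim cl B n → HasDim cl (A ∪ B) p → HasDim cl (A ∩ B) q →
    p + q = m + n

def IsLocallyModular {X : Type u} (cl : Set X → Set X) : Prop :=
  ∀ (A B : Set X) (m n p q : ℕ), IsClosedSet cl A → IsClosedSet cl B →
    HasDim cl A m → HasDim cl B n → HasDim cl (A ∪ B) p → HasDim cl (A ∩ B) q →
    0 < q → p + q = m + n

def InfiniteDim {X : Type u} (cl : Set X → Set X) : Prop :=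
  ∀ A : Finset X, cl ↑A ≠ Set.univ

def AutInvariant {G : Type u} [Group G] (cl : Set G → Set G) : Prop :=
  ∀ (f : G ≃* G) (A : Set G), (⇑f) '' cl A = cl ((⇑f) '' A)

def Homogeneous {G : Type u} [Group G] (cl : Set G → Set G) : Prop :=
  InfiniteDim cl ∧
  ∀ (A : Finset G) (b c : G), b ∉ cl ↑A → c ∉ cl ↑A →
    ∃ f : G ≃* G, (∀ a ∈ A, f a = a) ∧ f b = c

section Aux
variable {G : Type u} [Group G] {cl : Set G → Set G}

lemma mem_of_autFix (hP : IsPregeometry cl) (hhom : Homogeneous cl)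
    (B : Finset G) (t : G) (ht : ∀ f : G ≃* G, (∀ a ∈ B, f a = a) → f t = t) :
    t ∈ cl ↑B := by
  classical
  by_contra h
  obtain ⟨t', ht'⟩ : ∃ t', t' ∉ cl ↑(insert t B) := by
    have := hhom.1 (insert t B)
    rcases Set.ne_univ_iff_exists_notMem _ |>.mp this with ⟨t', ht'⟩
    exact ⟨t', ht'⟩
  have hsub : (↑B : Set G) ⊆ ↑(insert t B) := by
    intro z hz; simp only [Finset.coe_insert, Set.mem_insert_iff]; exact Or.inr hz
  have htB' : t' ∉ cl ↑B := fun hmem => ht' (hP.2.1 _ _ hsub hmem)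
  obtain ⟨f, hfix, hft⟩ := hhom.2 B t t' h htB'
  have hftt : f t = t := ht f hfix
  have : t' = t := by rw [← hft, hftt]
  apply ht'
  rw [this]
  exact hP.1 _ (by simp)

lemma inv_mem_cl (hP : IsPregeometry cl) (hhom : Homogeneous cl)
    {S : Set G} {s : G} (hs : s ∈ cl S) : s⁻¹ ∈ cl S := by
  have h1 : s⁻¹ ∈ cl ↑({s} : Finset G) := by
    apply mem_of_autFix hP hhom
    intro f hf
    have := hf s (by simp)
    rw [map_inv, this]
  have hsub : (↑({s} : Finset G) : Set G) ⊆ cl S := by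
    intro z hz; simp at hz; subst hz; exact hs
  have := hP.2.1 _ _ hsub h1
  rwa [hP.2.2.1] at this

lemma mul_mem_cl (hP : IsPregeometry cl) (hhom : Homogeneous cl)
    {S : Set G} {s t : G} (hs : s ∈ cl S) (ht : t ∈ cl S) : s * t ∈ cl S := by
  classical
  have h1 : s * t ∈ cl ↑({s, t} : Finset G) := by
    apply mem_of_autFix hP hhom
    intro f hf
    have h2 := hf s (by simp)
    have h3 := hf t (by simp)
    rw [map_mul, h2, h3]
  have hsub : (↑({s, t} : Finset G) : Set G) ⊆ cl S := by
    intro z hz; simp at hz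
    rcases hz with h | h <;> subst h <;> assumption
  have := hP.2.1 _ _ hsub h1
  rwa [hP.2.2.1] at this

lemma gen_of_hasDim (hP : IsPregeometry cl) (A : Finset G) (a b : G)
    (h : HasDim (fun S => cl (S ∪ ↑A)) {a, b} 2) :
    a ∉ cl ↑A ∧ b ∉ cl (↑A ∪ {a}) := by
  classical
  obtain ⟨B, ⟨hsub, _, hind⟩, hcard⟩ := h
  have hab : a ≠ b := by
    intro e
    subst e
    have : B ⊆ ({a} : Finset G) := by
      intro z hz
      have := hsub (Finset.mem_coe.mpr hz)
      simp at this ⊢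
      tauto
    have := Finset.card_le_card this
    simp [hcard] at this
  have hBab : B = ({a, b} : Finset G) := by
    apply Finset.eq_of_subset_of_card_le
    · intro z hz
      have := hsub (Finset.mem_coe.mpr hz)
      simpa using this
    · rw [hcard]
      exact Finset.card_le_two
  subst hBab
  have hbmem : b ∈ (↑({a, b} : Finset G) : Set G) := by simp
  have hamem : a ∈ (↑({a, b} : Finset G) : Set G) := by simp
  have hb := hind b hbmem
  have ha := hind a hamem
  simp only at hb ha
  have hcoe2 : (↑({a, b} : Finset G) : Set G) = {a, b} := by simp
  have hdb : (↑({a, b} : Finset G) : Set G) \ {b} = {a} := by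
    rw [hcoe2, Set.pair_diff_right hab]
  have hda : (↑({a, b} : Finset G) : Set G) \ {a} = {b} := by
    rw [hcoe2, Set.pair_diff_left hab]
  rw [hdb, Set.union_comm] at hb
  rw [hda] at ha
  refine ⟨fun hmem => ha ?_, hb⟩
  exact hP.2.1 _ _ (Set.subset_union_right) hmem

lemma image_coe_of_fix {f : G ≃* G} {A : Finset G} (hfix : ∀ a ∈ A, f a = a) :
    (⇑f) '' (↑A : Set G) = ↑A := by
  have : Set.EqOn (⇑f) id (↑A : Set G) := fun z hz => hfix z (Finset.mem_coe.mp hz)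
  rw [Set.image_congr this, Set.image_id]

lemma transfer (hP : IsPregeometry cl) (hinv : AutInvariant cl) (hhom : Homogeneous cl)
    (A : Finset G) {a b : G}
    (hba : b * a ∈ cl (↑A ∪ {a * b})) (ha : a ∉ cl ↑A) (hb : b ∉ cl (↑A ∪ {a}))
    {p q : G} (hp : p ∉ cl ↑A) (hq : q ∉ cl (↑A ∪ {p})) :
    q * p ∈ cl (↑A ∪ {p * q}) := by
  classical
  obtain ⟨f₁, hfix₁, hf₁a⟩ := hhom.2 A a p ha hp
  have himg1 : (⇑f₁) '' (↑A ∪ {a}) = ↑A ∪ {p} := by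
    rw [Set.image_union, image_coe_of_fix hfix₁, Set.image_singleton, hf₁a]
  have hb1 : f₁ b ∉ cl (↑A ∪ {p}) := by
    intro hmem
    rw [← himg1, ← hinv] at hmem
    obtain ⟨z, hz, hze⟩ := hmem
    have := f₁.injective hze
    subst this
    exact hb hz
  have hcoe : (↑(insert p A) : Set G) = ↑A ∪ {p} := by
    rw [Finset.coe_insert, Set.insert_eq, Set.union_comm]
  obtain ⟨f₂, hfix₂, hf₂b⟩ := hhom.2 (insert p A) (f₁ b) q
    (by rwa [hcoe]) (by rwa [hcoe])
  set f : G ≃* G := f₁.trans f₂ with hf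
  have hffix : ∀ z ∈ A, f z = z := by
    intro z hz
    have h1 : f₁ z = z := hfix₁ z hz
    have h2 : f₂ z = z := hfix₂ z (Finset.mem_insert_of_mem hz)
    simp [hf, MulEquiv.trans_apply, h1, h2]
  have hfa : f a = p := by
    simp [hf, MulEquiv.trans_apply, hf₁a]
    exact hfix₂ p (Finset.mem_insert_self p A)
  have hfb : f b = q := by
    simp [hf, MulEquiv.trans_apply, hf₂b]
  have himg2 : (⇑f) '' (↑A ∪ {a * b}) = ↑A ∪ {p * q} := by
    rw [Set.image_union, image_coe_of_fix hffix, Set.image_singleton, map_mul, hfa, hfb]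
  have : f (b * a) ∈ (⇑f) '' cl (↑A ∪ {a * b}) := ⟨b * a, hba, rfl⟩
  rw [hinv, himg2, map_mul, hfa, hfb] at this
  exact this

end Aux

theorem stmt15 {G : Type u} [Group G] (cl : Set G → Set G) (hP : IsPregeometry cl)
    (hinv : AutInvariant cl) (hhom : Homogeneous cl) (A : Finset G) (a b : G)
    (hgen : HasDim (fun S => cl (S ∪ ↑A)) {a, b} 2)
    (hba : b * a ∈ cl (↑A ∪ {a * b})) :
    ∀ x y : G, HasDim (fun S => cl (S ∪ ↑A)) {x, y} 2 →
      y⁻¹ * x * y ∈ cl (↑A ∪ {x}) := by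
  obtain ⟨ha, hb⟩ := gen_of_hasDim hP A a b hgen
  intro x y hxy
  obtain ⟨hx, hy⟩ := gen_of_hasDim hP A x y hxy
  -- y⁻¹ ∉ cl ↑A
  have hyA : y ∉ cl ↑A := fun h => hy (hP.2.1 _ _ Set.subset_union_left h)
  have hyinv : y⁻¹ ∉ cl ↑A := fun h => hyA (by simpa using inv_mem_cl hP hhom h)
  -- x ∉ cl (↑A ∪ {y})
  have hxAy : x ∉ cl (↑A ∪ {y}) := by
    intro h
    exact hy (hP.2.2.2.2 _ x y h hx)
  -- cl (↑A ∪ {y⁻¹}) ⊆ cl (↑A ∪ {y})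
  have hclsub : cl (↑A ∪ {y⁻¹}) ⊆ cl (↑A ∪ {y}) := by
    have hsub : (↑A : Set G) ∪ {y⁻¹} ⊆ cl (↑A ∪ {y}) := by
      intro z hz
      rcases hz with hz | hz
      · exact hP.1 _ (Or.inl hz)
      · rcases hz with rfl
        exact inv_mem_cl hP hhom (hP.1 _ (Or.inr rfl))
    have := hP.2.1 _ _ hsub
    rwa [hP.2.2.1] at this
  -- x*y ∉ cl (↑A ∪ {y⁻¹})
  have hxyn : x * y ∉ cl (↑A ∪ {y⁻¹}) := by
    intro h
    apply hxAy
    apply hclsub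
    have hyinvmem : y⁻¹ ∈ cl (↑A ∪ {y⁻¹}) := hP.1 _ (Or.inr rfl)
    have := mul_mem_cl hP hhom h hyinvmem
    simpa using this
  -- transfer to the pair (y⁻¹, x*y)
  have key := transfer hP hinv hhom A hba ha hb hyinv hxyn
  have h1 : (x * y) * y⁻¹ = x := by group
  have h2 : y⁻¹ * (x * y) = y⁻¹ * x * y := by group
  rw [h1, h2] at key
  -- exchange
  exact hP.2.2.2.2 _ x (y⁻¹ * x * y) key hx
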